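/- The suspension ΣK of a finite simplicial complex K is strongly collapsible if and only if K is strongly collapsible. -/

import Mathlib

open Finset

/-- A finite abstract simplicial complex on vertex type `V`. -/
structure SC (V : Type*) [DecidableEq V] where
  faces : Finset (Finset V)
  nonempty_of_mem : ∀ σ ∈ faces, σ.Nonempty
  down_closed : ∀ σ ∈ faces, ∀ τ ⊆ σ, τ.Nonempty → τ ∈ faces

variable {V : Type*} [DecidableEq V] {W : Type*} [DecidableEq W]

def SC.IsVertex (K : SC V) (v : V) : Prop := ({v} : Finset V) ∈ K.faces

def SC.IsMaximal (K : SC V) (σ : Finset V) : Prop :=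
  σ ∈ K.faces ∧ ∀ τ ∈ K.faces, σ ⊆ τ → σ = τ

/-- `K.Dominated v w` : the vertex `v` is dominated by the vertex `w ≠ v`,
i.e. every maximal simplex containing `v` also contains `w`. -/
def SC.Dominated (K : SC V) (v w : V) : Prop :=
  v ≠ w ∧ K.IsVertex v ∧ K.IsVertex w ∧ ∀ σ, K.IsMaximal σ → v ∈ σ → w ∈ σ

/-- Deletion of a vertex: the subcomplex of simplices not containing `v`. -/
def SC.delete (K : SC V) (v : V) : SC V where
  faces := K.faces.filter (fun σ => v ∉ σ)
  nonempty_of_mem σ hσ := K.nonempty_of_mem σ (mem_filter.mp hσ).1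
  down_closed σ hσ τ hτ hne := by
    rw [mem_filter] at hσ ⊢
    exact ⟨K.down_closed σ hσ.1 τ hτ hne, fun hv => hσ.2 (hτ hv)⟩

/-- An elementary strong collapse: deletion of a dominated vertex. -/
def CollapseStep (K L : SC V) : Prop := ∃ v w, K.Dominated v w ∧ L = K.delete v

/-- `Collapses K L` : `K` strongly collapses to `L`. -/
def Collapses (K L : SC V) : Prop := Relation.ReflTransGen CollapseStep K L

def SC.Minimal (K : SC V) : Prop := ∀ v w, ¬ K.Dominated v w

def StronglyCollapsible (K : SC V) : Prop :=
  ∃ (L : SC V) (v : V), Collapses K L ∧ L.faces = {({v} : Finset V)}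

def IsCore (K M : SC V) : Prop := Collapses K M ∧ M.Minimal

/-- Union of two complexes on the same vertex type. -/
def SC.union (K L : SC V) : SC V where
  faces := K.faces ∪ L.faces
  nonempty_of_mem σ h := (mem_union.mp h).elim (K.nonempty_of_mem σ) (L.nonempty_of_mem σ)
  down_closed σ h τ hτ hne := mem_union.mpr <| (mem_union.mp h).elim
    (fun h => Or.inl (K.down_closed σ h τ hτ hne))
    (fun h => Or.inr (L.down_closed σ h τ hτ hne))

/-- Isomorphism of simplicial complexes on the same vertex type. -/
def Isom (K L : SC V) : Prop :=
  ∃ e : V ≃ V, ∀ σ : Finset V, σ ∈ K.faces ↔ σ.image e ∈ L.faces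

def SC.star (K : SC V) (a : V) : Finset (Finset V) := K.faces.filter (fun σ => a ∈ σ)

def SC.link (K : SC V) (v : V) : Finset (Finset V) :=
  K.faces.filter (fun τ => v ∉ τ ∧ insert v τ ∈ K.faces)


/-!
Strong collapses are confluent: deleting any dominated vertex of a strongly collapsible complex
leaves a strongly collapsible complex. Two deletions of dominated vertices `u ≠ v` commute, since
after deleting one of them the other is still dominated (by its old dominator, or by the dominator
of the deleted vertex); when `u` and `v` dominate each other, the swap `u ↔ v` is an isomorphism
between the two deletions. Consequently `K` is strongly collapsible iff its core (a minimal
complex reached by strong collapses) is a point.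

A dominated vertex of `K` stays dominated in `ΣK`, so `ΣK` collapses to `ΣM` for a core `M` of
`K`. If `M` is a point, `ΣM` is a cone, hence strongly collapsible. Otherwise `ΣM` is minimal: a
domination between vertices of `M` in `ΣM` is one in `M`; a suspension vertex dominated by a
vertex `w` of `M` makes `M` a cone with apex `w`, which a minimal complex other than a point is
not; any other domination would put both suspension vertices in one simplex. Being minimal with
two suspension vertices, `ΣM` is not strongly collapsible.
-/

open Finset

namespace SC

variable {K L : SC V} {σ τ : Finset V} {a u v w x : V}

theorem ext (h : K.faces = L.faces) : K = L := by
  cases K; cases L; simp_all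

@[simp]
theorem mem_delete : σ ∈ (K.delete v).faces ↔ σ ∈ K.faces ∧ v ∉ σ :=
  mem_filter

theorem delete_comm : (K.delete u).delete v = (K.delete v).delete u :=
  SC.ext <| Finset.ext fun σ => by simp only [mem_delete]; tauto

theorem card_faces_delete_lt (hv : K.IsVertex v) : (K.delete v).faces.card < K.faces.card :=
  card_lt_card ⟨filter_subset _ _, fun hsub => by simpa using (mem_delete.1 (hsub hv)).2⟩

theorem exists_isMaximal_superset (hσ : σ ∈ K.faces) :
    ∃ τ, K.IsMaximal τ ∧ σ ⊆ τ := by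
  obtain ⟨τ, hστ, hτ, hmax⟩ := K.faces.exists_le_maximal hσ
  exact ⟨τ, ⟨hτ, fun ρ hρ hτρ => le_antisymm hτρ (hmax hρ hτρ)⟩, hστ⟩

theorem exists_isMaximal_of_isMaximal_delete (h : (K.delete u).IsMaximal σ) :
    ∃ τ, K.IsMaximal τ ∧ σ = τ.erase u := by
  obtain ⟨hσ, huσ⟩ := mem_delete.1 h.1
  obtain ⟨τ, hτ, hστ⟩ := exists_isMaximal_superset hσ
  have hστ : σ ⊆ τ.erase u := fun a ha =>
    mem_erase.2 ⟨fun hau => huσ (hau ▸ ha), hστ ha⟩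
  have hτu : τ.erase u ∈ (K.delete u).faces :=
    mem_delete.2 ⟨K.down_closed τ hτ.1 _ (erase_subset _ _)
      ((K.nonempty_of_mem σ hσ).mono hστ), notMem_erase _ _⟩
  exact ⟨τ, hτ, h.2 _ hτu hστ⟩

theorem faces_eq_singleton (ha : K.IsVertex a) (h : ∀ v, K.IsVertex v → v = a) :
    K.faces = {{a}} := by
  ext σ
  refine ⟨fun hσ => mem_singleton.2 ?_, fun hσ => mem_singleton.1 hσ ▸ ha⟩
  refine (K.nonempty_of_mem σ hσ).subset_singleton_iff.1 fun v hv => mem_singleton.2 (h v ?_)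
  exact K.down_closed σ hσ {v} (singleton_subset_iff.2 hv) (singleton_nonempty v)

theorem minimal_of_faces_eq_singleton (hK : K.faces = {{a}}) : K.Minimal := by
  intro v w hvw
  have hv := hvw.2.1
  have hw := hvw.2.2.1
  rw [IsVertex, hK, mem_singleton, singleton_inj] at hv hw
  exact hvw.1 (hv.trans hw.symm)

theorem Dominated.insert_mem (h : K.Dominated v w) (hσ : σ ∈ K.faces) (hv : v ∈ σ) :
    insert w σ ∈ K.faces := by
  obtain ⟨τ, hτ, hστ⟩ := exists_isMaximal_superset hσ
  exact K.down_closed τ hτ.1 _ (insert_subset (h.2.2.2 τ hτ (hστ hv)) hστ)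
    (insert_nonempty _ _)

theorem Dominated.delete (h : K.Dominated v w) (hvu : v ≠ u) (hwu : w ≠ u) :
    (K.delete u).Dominated v w := by
  refine ⟨h.1, mem_delete.2 ⟨h.2.1, by simpa using hvu.symm⟩,
    mem_delete.2 ⟨h.2.2.1, by simpa using hwu.symm⟩, fun σ hσ hvσ => ?_⟩
  obtain ⟨τ, hτ, rfl⟩ := exists_isMaximal_of_isMaximal_delete hσ
  exact mem_erase.2 ⟨hwu, h.2.2.2 τ hτ (mem_of_mem_erase hvσ)⟩

theorem Dominated.delete_trans (hvu : K.Dominated v u) (hux : K.Dominated u x) (hxv : x ≠ v) :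
    (K.delete u).Dominated v x := by
  refine ⟨hxv.symm, mem_delete.2 ⟨hvu.2.1, by simpa using hvu.1.symm⟩,
    mem_delete.2 ⟨hux.2.2.1, by simpa using hux.1⟩, fun σ hσ hvσ => ?_⟩
  obtain ⟨τ, hτ, rfl⟩ := exists_isMaximal_of_isMaximal_delete hσ
  exact mem_erase.2 ⟨hux.1.symm, hux.2.2.2 τ hτ (hvu.2.2.2 τ hτ (mem_of_mem_erase hvσ))⟩

theorem Dominated.exists_dominated_delete (hvw : K.Dominated v w) (hux : K.Dominated u x)
    (huv : u ≠ v) (hmut : ¬(w = u ∧ x = v)) : ∃ w', (K.delete u).Dominated v w' := by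
  by_cases hwu : w = u
  · subst hwu
    exact ⟨x, hvw.delete_trans hux fun hxv => hmut ⟨rfl, hxv⟩⟩
  · exact ⟨w, hvw.delete huv.symm hwu⟩

def IsCone (K : SC V) (a : V) : Prop :=
  K.IsVertex a ∧ ∀ σ, K.IsMaximal σ → a ∈ σ

theorem isCone_of_faces_eq_singleton (hK : K.faces = {{a}}) : K.IsCone a :=
  ⟨by simp [IsVertex, hK], fun σ hσ => by simp [mem_singleton.1 (hK ▸ hσ.1)]⟩

theorem IsCone.dominated (h : K.IsCone a) (hv : K.IsVertex v) (hva : v ≠ a) : K.Dominated v a :=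
  ⟨hva, hv, h.1, fun σ hσ _ => h.2 σ hσ⟩

theorem IsCone.delete (h : K.IsCone a) (hva : v ≠ a) : (K.delete v).IsCone a := by
  refine ⟨mem_delete.2 ⟨h.1, by simpa using hva⟩, fun σ hσ => ?_⟩
  obtain ⟨τ, hτ, rfl⟩ := exists_isMaximal_of_isMaximal_delete hσ
  exact mem_erase.2 ⟨hva.symm, h.2 τ hτ⟩

theorem IsCone.faces_eq_singleton_of_minimal (h : K.IsCone a) (hK : K.Minimal) :
    K.faces = {{a}} :=
  faces_eq_singleton h.1 fun v hv => by_contra fun hva => hK v a (h.dominated hv hva)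

end SC

section Collapsibility

variable {K L : SC V}

theorem StronglyCollapsible.of_collapses (hKL : Collapses K L) (hL : StronglyCollapsible L) :
    StronglyCollapsible K :=
  let ⟨M, m, hLM, hM⟩ := hL
  ⟨M, m, hKL.trans hLM, hM⟩

theorem SC.IsCone.stronglyCollapsible {a : V} (h : K.IsCone a) : StronglyCollapsible K := by
  induction hn : K.faces.card using Nat.strong_induction_on generalizing K with
  | _ n ih =>
  by_cases hK : ∃ v, K.IsVertex v ∧ v ≠ a
  · obtain ⟨v, hv, hva⟩ := hK
    exact .of_collapses (.single ⟨v, a, h.dominated hv hva, rfl⟩)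
      (ih _ (hn ▸ SC.card_faces_delete_lt hv) (h.delete hva) rfl)
  · push Not at hK
    exact ⟨K, a, .refl, SC.faces_eq_singleton h.1 hK⟩

theorem SC.Minimal.faces_eq_singleton_of_stronglyCollapsible (hK : K.Minimal)
    (h : StronglyCollapsible K) : ∃ v, K.faces = {{v}} := by
  obtain ⟨M, m, hKM, hM⟩ := h
  obtain rfl | ⟨_, ⟨v, w, hvw, _⟩, _⟩ := hKM.cases_head
  · exact ⟨m, hM⟩
  · exact absurd hvw (hK v w)

theorem SC.exists_collapses_minimal (K : SC V) : ∃ M, Collapses K M ∧ M.Minimal := by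
  induction hn : K.faces.card using Nat.strong_induction_on generalizing K with
  | _ n ih =>
  by_cases hK : K.Minimal
  · exact ⟨K, .refl, hK⟩
  · simp only [SC.Minimal, not_forall, not_not] at hK
    obtain ⟨v, w, hvw⟩ := hK
    obtain ⟨M, hM, hMmin⟩ := ih _ (hn ▸ SC.card_faces_delete_lt hvw.2.1) (K.delete v) rfl
    exact ⟨M, .head ⟨v, w, hvw, rfl⟩ hM, hMmin⟩

end Collapsibility

namespace SC

variable {K : SC V} {L : SC W} {e : V ≃ W} {σ : Finset V} {u v w : V}

def IsoVia (e : V ≃ W) (K : SC V) (L : SC W) : Prop :=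
  ∀ σ, σ ∈ K.faces ↔ e.finsetCongr σ ∈ L.faces

theorem IsoVia.symm (h : IsoVia e K L) : IsoVia e.symm L K := fun σ => by
  rw [h, ← Equiv.finsetCongr_symm, Equiv.apply_symm_apply]

theorem IsoVia.isMaximal (h : IsoVia e K L) (hσ : K.IsMaximal σ) :
    L.IsMaximal (e.finsetCongr σ) := by
  refine ⟨(h σ).1 hσ.1, fun ρ hρ hσρ => ?_⟩
  obtain ⟨ρ, rfl⟩ := e.finsetCongr.surjective ρ
  rw [hσ.2 ρ ((h ρ).2 hρ) (by simpa using hσρ)]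

theorem IsoVia.dominated (h : IsoVia e K L) (hvw : K.Dominated v w) :
    L.Dominated (e v) (e w) := by
  refine ⟨e.injective.ne hvw.1, by simpa [IsVertex] using (h {v}).1 hvw.2.1,
    by simpa [IsVertex] using (h {w}).1 hvw.2.2.1, fun σ hσ hvσ => ?_⟩
  obtain ⟨σ, rfl⟩ := e.finsetCongr.surjective σ
  have hσ' : K.IsMaximal σ := by
    have := h.symm.isMaximal hσ
    rwa [← Equiv.finsetCongr_symm, Equiv.symm_apply_apply] at this
  simpa using hvw.2.2.2 σ hσ' (by simpa using hvσ)

theorem IsoVia.delete (h : IsoVia e K L) (v : V) : IsoVia e (K.delete v) (L.delete (e v)) :=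
  fun σ => by simp [h σ]

theorem IsoVia.collapses (h : IsoVia e K L) {M : SC V} (hKM : Collapses K M) :
    ∃ N, Collapses L N ∧ IsoVia e M N := by
  induction hKM with
  | refl => exact ⟨L, .refl, h⟩
  | tail _ hstep ih =>
    obtain ⟨N, hLN, hN⟩ := ih
    obtain ⟨v, w, hvw, rfl⟩ := hstep
    exact ⟨N.delete (e v), hLN.tail ⟨e v, e w, hN.dominated hvw, rfl⟩, hN.delete v⟩

theorem IsoVia.stronglyCollapsible (h : IsoVia e K L) (hK : StronglyCollapsible K) :
    StronglyCollapsible L := by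
  obtain ⟨M, m, hKM, hM⟩ := hK
  obtain ⟨N, hLN, hN⟩ := h.collapses hKM
  refine ⟨N, e m, hLN, Finset.ext fun σ => ?_⟩
  obtain ⟨σ, rfl⟩ := e.finsetCongr.surjective σ
  rw [← hN, hM, mem_singleton, mem_singleton, ← e.finsetCongr.apply_eq_iff_eq (y := {m})]
  simp

theorem Dominated.map_swap_mem_delete (h : K.Dominated u v) (hσ : σ ∈ (K.delete v).faces) :
    (Equiv.swap u v).finsetCongr σ ∈ (K.delete u).faces := by
  obtain ⟨hσ, hvσ⟩ := mem_delete.1 hσ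
  have hmem : ∀ x, x ∈ (Equiv.swap u v).finsetCongr σ ↔ Equiv.swap u v x ∈ σ := by simp
  refine mem_delete.2 ⟨?_, by rwa [hmem, Equiv.swap_apply_left]⟩
  by_cases huσ : u ∈ σ
  -- the image is `(insert v σ).erase u`, and `insert v σ` is a face since `v` dominates `u`
  · refine K.down_closed _ (h.insert_mem hσ huσ) _ (fun x hx => ?_)
      (K.nonempty_of_mem σ hσ).map
    rw [hmem, Equiv.swap_apply_def] at hx
    split_ifs at hx <;> simp_all
  · convert hσ using 1
    ext x
    rw [hmem, Equiv.swap_apply_def]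
    split_ifs <;> simp_all

theorem Dominated.isoVia_swap (huv : K.Dominated u v) (hvu : K.Dominated v u) :
    IsoVia (Equiv.swap u v) (K.delete v) (K.delete u) := fun σ => by
  refine ⟨huv.map_swap_mem_delete, fun hσ => ?_⟩
  have hinv : (Equiv.swap v u).finsetCongr ((Equiv.swap u v).finsetCongr σ) = σ := by
    ext; simp [Equiv.swap_comm v u]
  simpa only [hinv] using hvu.map_swap_mem_delete hσ

end SC

section Confluence

variable {K L : SC V}

theorem StronglyCollapsible.of_collapseStep (hK : StronglyCollapsible K) (hKL : CollapseStep K L) :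
    StronglyCollapsible L := by
  induction hn : K.faces.card using Nat.strong_induction_on generalizing K L with
  | _ n ih =>
  obtain ⟨M, m, hKM, hM⟩ := hK
  obtain ⟨u, x, hux, rfl⟩ := hKL
  obtain rfl | ⟨_, ⟨v, w, hvw, rfl⟩, hvM⟩ := hKM.cases_head
  · exact absurd hux (SC.minimal_of_faces_eq_singleton hM u x)
  have hv : StronglyCollapsible (K.delete v) := ⟨M, m, hvM, hM⟩
  by_cases huv : u = v
  · exact huv ▸ hv
  by_cases hmut : w = u ∧ x = v
  · obtain ⟨rfl, rfl⟩ := hmut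
    exact (hux.isoVia_swap hvw).stronglyCollapsible hv
  obtain ⟨w', hvw'⟩ := hvw.exists_dominated_delete hux huv hmut
  obtain ⟨x', hux'⟩ :=
    hux.exists_dominated_delete hvw (Ne.symm huv) fun h => hmut ⟨h.2, h.1⟩
  have hvu : StronglyCollapsible ((K.delete v).delete u) :=
    ih _ (hn ▸ SC.card_faces_delete_lt hvw.2.1) hv ⟨u, x', hux', rfl⟩ rfl
  rw [SC.delete_comm] at hvu
  exact .of_collapses (.single ⟨v, w', hvw', rfl⟩) hvu

theorem Collapses.stronglyCollapsible_iff (hKL : Collapses K L) :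
    StronglyCollapsible K ↔ StronglyCollapsible L := by
  refine ⟨fun hK => ?_, .of_collapses hKL⟩
  induction hKL with
  | refl => exact hK
  | tail _ hstep ih => exact ih.of_collapseStep hstep

end Confluence

def IsSuspension (K : SC V) (J : SC (V ⊕ Bool)) : Prop :=
  ∀ σ : Finset (V ⊕ Bool), σ ∈ J.faces ↔
    ((∃ τ ∈ K.faces, σ = τ.image Sum.inl) ∨
      (∃ b : Bool, σ = {(Sum.inr b : V ⊕ Bool)}) ∨
      ∃ τ ∈ K.faces, ∃ b : Bool, σ = insert (Sum.inr b) (τ.image Sum.inl))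

namespace IsSuspension

variable {K L : SC V} {J : SC (V ⊕ Bool)} {σ : Finset (V ⊕ Bool)} {τ : Finset V} {a v w : V}
  {b b' : Bool}

theorem image_inl_mem (h : IsSuspension K J) (hτ : τ ∈ K.faces) :
    τ.image Sum.inl ∈ J.faces :=
  (h _).2 (.inl ⟨τ, hτ, rfl⟩)

theorem insert_mem (h : IsSuspension K J) (hτ : τ ∈ K.faces) (b : Bool) :
    insert (Sum.inr b) (τ.image Sum.inl) ∈ J.faces :=
  (h _).2 (.inr (.inr ⟨τ, hτ, b, rfl⟩))

theorem isVertex_inr (h : IsSuspension K J) (b : Bool) : J.IsVertex (Sum.inr b) :=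
  (h _).2 (.inr (.inl ⟨b, rfl⟩))

theorem isVertex_inl_iff (h : IsSuspension K J) : J.IsVertex (Sum.inl v) ↔ K.IsVertex v := by
  refine ⟨fun hv => ?_, fun hv => by simpa [SC.IsVertex] using h.image_inl_mem hv⟩
  rcases (h _).1 hv with ⟨τ, hτ, hvτ⟩ | ⟨b, hb⟩ | ⟨τ, -, b, hb⟩
  · have hτv : τ = {v} := Finset.image_injective Sum.inl_injective (by simpa using hvτ.symm)
    rwa [SC.IsVertex, ← hτv]
  · simp at hb
  · simpa using congrArg (Sum.inr b ∈ ·) hb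

theorem eq_of_inr_mem (h : IsSuspension K J) (hσ : σ ∈ J.faces) (hb : Sum.inr b ∈ σ)
    (hb' : Sum.inr b' ∈ σ) : b = b' := by
  rcases (h σ).1 hσ with ⟨τ, -, rfl⟩ | ⟨c, rfl⟩ | ⟨τ, -, c, rfl⟩ <;> simp_all

theorem isMaximal_insert (h : IsSuspension K J) (hτ : K.IsMaximal τ) (b : Bool) :
    J.IsMaximal (insert (Sum.inr b) (τ.image Sum.inl)) := by
  refine ⟨h.insert_mem hτ.1 b, fun σ hσ hsub => ?_⟩
  have hsub' : ∀ a ∈ τ, Sum.inl a ∈ σ := fun a ha =>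
    hsub (mem_insert_of_mem (mem_image_of_mem _ ha))
  rcases (h σ).1 hσ with ⟨ρ, -, rfl⟩ | ⟨c, rfl⟩ | ⟨ρ, hρ, c, rfl⟩
  · simpa using hsub (mem_insert_self _ _)
  · obtain ⟨a, ha⟩ := K.nonempty_of_mem τ hτ.1
    simpa using hsub' a ha
  · have hbc : b = c := by simpa using hsub (mem_insert_self _ _)
    rw [hbc, hτ.2 ρ hρ fun a ha => by simpa using hsub' a ha]

theorem exists_isMaximal_eq_insert (h : IsSuspension K J) (hK : K.faces.Nonempty)
    (hσ : J.IsMaximal σ) :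
    ∃ τ b, K.IsMaximal τ ∧ σ = insert (Sum.inr b) (τ.image Sum.inl) := by
  suffices ∃ τ b, K.IsMaximal τ ∧ σ ⊆ insert (Sum.inr b) (τ.image Sum.inl) by
    obtain ⟨τ, b, hτ, hστ⟩ := this
    exact ⟨τ, b, hτ, hσ.2 _ (h.insert_mem hτ.1 b) hστ⟩
  rcases (h σ).1 hσ.1 with ⟨τ, hτ, rfl⟩ | ⟨b, rfl⟩ | ⟨τ, hτ, b, rfl⟩
  · obtain ⟨ρ, hρ, hτρ⟩ := SC.exists_isMaximal_superset hτ
    exact ⟨ρ, true, hρ, (image_subset_image hτρ).trans (subset_insert _ _)⟩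
  · obtain ⟨ρ, hρ, -⟩ := SC.exists_isMaximal_superset hK.choose_spec
    exact ⟨ρ, b, hρ, by simp⟩
  · obtain ⟨ρ, hρ, hτρ⟩ := SC.exists_isMaximal_superset hτ
    exact ⟨ρ, b, hρ, insert_subset_insert _ (image_subset_image hτρ)⟩

theorem dominated_inl_iff (h : IsSuspension K J) :
    J.Dominated (Sum.inl v) (Sum.inl w) ↔ K.Dominated v w := by
  simp only [SC.Dominated, h.isVertex_inl_iff, ne_eq, Sum.inl.injEq]
  refine and_congr_right fun _ => and_congr_right fun hv => and_congr_right fun _ =>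
    ⟨fun hJ τ hτ hvτ => ?_, fun hK σ hσ hvσ => ?_⟩
  · simpa using hJ _ (h.isMaximal_insert hτ true) (by simpa using hvτ)
  · obtain ⟨τ, b, hτ, rfl⟩ := h.exists_isMaximal_eq_insert ⟨_, hv⟩ hσ
    simpa using hK τ hτ (by simpa using hvσ)

theorem not_dominated_inl_inr (h : IsSuspension K J) : ¬ J.Dominated (Sum.inl v) (Sum.inr b) := by
  intro hvb
  obtain ⟨τ, hτ, hvτ⟩ := SC.exists_isMaximal_superset (h.isVertex_inl_iff.1 hvb.2.1)
  have hσ := h.isMaximal_insert hτ (!b)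
  have hb := hvb.2.2.2 _ hσ (by simpa using hvτ)
  simpa using h.eq_of_inr_mem hσ.1 hb (mem_insert_self _ _)

theorem not_dominated_inr_inr (h : IsSuspension K J) :
    ¬ J.Dominated (Sum.inr b) (Sum.inr b') := by
  intro hbb'
  obtain ⟨σ, hσ, hbσ⟩ := SC.exists_isMaximal_superset hbb'.2.1
  have hb := hbσ (mem_singleton_self _)
  exact hbb'.1 (congrArg _ (h.eq_of_inr_mem hσ.1 hb (hbb'.2.2.2 σ hσ hb)))

theorem isCone_of_dominated_inr (h : IsSuspension K J) (hbw : J.Dominated (Sum.inr b) (Sum.inl w)) :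
    K.IsCone w :=
  ⟨h.isVertex_inl_iff.1 hbw.2.2.1, fun τ hτ => by
    simpa using hbw.2.2.2 _ (h.isMaximal_insert hτ b) (mem_insert_self _ _)⟩

theorem minimal (h : IsSuspension K J) (hK : K.Minimal) (hpt : ∀ v, K.faces ≠ {{v}}) :
    J.Minimal := by
  rintro (v | b) (w | b') hd
  · exact hK v w (h.dominated_inl_iff.1 hd)
  · exact h.not_dominated_inl_inr hd
  · exact hpt w ((h.isCone_of_dominated_inr hd).faces_eq_singleton_of_minimal hK)
  · exact h.not_dominated_inr_inr hd

theorem isCone (h : IsSuspension K J) (ha : K.IsCone a) : J.IsCone (Sum.inl a) := by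
  refine ⟨h.isVertex_inl_iff.2 ha.1, fun σ hσ => ?_⟩
  obtain ⟨τ, b, hτ, rfl⟩ := h.exists_isMaximal_eq_insert ⟨_, ha.1⟩ hσ
  simpa using ha.2 τ hτ

theorem faces_ne_singleton (h : IsSuspension K J) (y : V ⊕ Bool) : J.faces ≠ {{y}} := by
  intro hJ
  have htrue := h.isVertex_inr true
  have hfalse := h.isVertex_inr false
  rw [SC.IsVertex, hJ, mem_singleton, singleton_inj] at htrue hfalse
  simpa using htrue.trans hfalse.symm

theorem delete (h : IsSuspension K J) (v : V) :
    IsSuspension (K.delete v) (J.delete (Sum.inl v)) := by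
  intro σ
  simp only [SC.mem_delete, h σ]
  constructor
  · rintro ⟨⟨τ, hτ, rfl⟩ | ⟨b, rfl⟩ | ⟨τ, hτ, b, rfl⟩, hvσ⟩
    · exact .inl ⟨τ, ⟨hτ, by simpa using hvσ⟩, rfl⟩
    · exact .inr (.inl ⟨b, rfl⟩)
    · exact .inr (.inr ⟨τ, ⟨hτ, by simpa using hvσ⟩, b, rfl⟩)
  · rintro (⟨τ, ⟨hτ, hvτ⟩, rfl⟩ | ⟨b, rfl⟩ | ⟨τ, ⟨hτ, hvτ⟩, b, rfl⟩)
    · exact ⟨.inl ⟨τ, hτ, rfl⟩, by simpa using hvτ⟩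
    · exact ⟨.inr (.inl ⟨b, rfl⟩), by simp⟩
    · exact ⟨.inr (.inr ⟨τ, hτ, b, rfl⟩), by simpa using hvτ⟩

theorem collapses (h : IsSuspension K J) (hKL : Collapses K L) :
    ∃ J', Collapses J J' ∧ IsSuspension L J' := by
  induction hKL with
  | refl => exact ⟨J, .refl, h⟩
  | tail _ hstep ih =>
    obtain ⟨J', hJJ', hJ'⟩ := ih
    obtain ⟨v, w, hvw, rfl⟩ := hstep
    exact ⟨J'.delete (Sum.inl v),
      hJJ'.tail ⟨Sum.inl v, Sum.inl w, hJ'.dominated_inl_iff.2 hvw, rfl⟩, hJ'.delete v⟩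

end IsSuspension

theorem stmt11 (K : SC V) (J : SC (V ⊕ Bool))
    (hJ : ∀ σ : Finset (V ⊕ Bool), σ ∈ J.faces ↔
      ((∃ τ ∈ K.faces, σ = τ.image Sum.inl) ∨
        (∃ b : Bool, σ = {(Sum.inr b : V ⊕ Bool)}) ∨
        ∃ τ ∈ K.faces, ∃ b : Bool, σ = insert (Sum.inr b) (τ.image Sum.inl))) :
    StronglyCollapsible J ↔ StronglyCollapsible K := by
  have hKJ : IsSuspension K J := hJ
  obtain ⟨M, hKM, hM⟩ := K.exists_collapses_minimal
  obtain ⟨J', hJJ', hMJ'⟩ := hKJ.collapses hKM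
  rw [hJJ'.stronglyCollapsible_iff, hKM.stronglyCollapsible_iff]
  by_cases hpt : ∃ m, M.faces = {{m}}
  · obtain ⟨m, hm⟩ := hpt
    exact iff_of_true (hMJ'.isCone (SC.isCone_of_faces_eq_singleton hm)).stronglyCollapsible
      ⟨M, m, .refl, hm⟩
  · push Not at hpt
    refine iff_of_false (fun hJ' => ?_) fun hM' => ?_
    · obtain ⟨y, hy⟩ := (hMJ'.minimal hM hpt).faces_eq_singleton_of_stronglyCollapsible hJ'
      exact hMJ'.faces_ne_singleton y hy
    · obtain ⟨m, hm⟩ := hM.faces_eq_singleton_of_stronglyCollapsible hM'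
      exact hpt m hm
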